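/- Let k ≥ 2 be an integer, q = e^{2πi/(k+2)}, R̃ = diag(i q^{-1/2}, -i q^{1/2}), and F = (√q/(q+1))·[[-1, √(q+1/q+1)], [√(q+1/q+1), 1]]. Set A = R̃² F R̃⁴ F and B = R̃² F R̃⁶ F. Then the commutator W = A B A⁻¹ B⁻¹ has trace tr(W) = 4 - 2cos(6π/(k+2)) + 6cos(4π/(k+2)) - 6cos(2π/(k+2)). -/

import Mathlib

open Complex Matrix

/-!
Write `p = q + q⁻¹ = 2 cos (2π/(k+2))`. Since `R̃² = -diag(q⁻¹, q)`, both `A` and `B` are, up to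
sign, products `E(x) F E(y) F` with `E(z) = diag(z⁻¹, z)` and `F = [[-c, u], [u, c]]` a reflection
(`c² + u² = 1`), so `det A = det B = 1`. For such matrices the Fricke identity
`tr [A, B] = tr² A + tr² B + tr² AB - tr A tr B tr AB - 2` reduces everything to three traces, and
since `c² = 1/(p+2)`, `u² = (p+1)/(p+2)` these are polynomials in `p`:
`tr A = p - p²`, `tr B = p³ - p² - p`, `tr AB = -p⁵ + 2p⁴ - p² + p`. Hence `tr W = -p³ + 3p² - 2`,
which the double and triple angle formulas turn into the stated combination of cosines.
-/

namespace Matrix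

variable {R : Type*} [CommRing R]

theorem trace_mul_mul_adjugate_mul_adjugate (A B : Matrix (Fin 2) (Fin 2) R) :
    trace (A * B * adjugate A * adjugate B) =
      trace A ^ 2 * det B + trace B ^ 2 * det A + trace (A * B) ^ 2
        - trace A * trace B * trace (A * B) - 2 * det A * det B := by
  rw [eta_fin_two A, eta_fin_two B]
  simp only [adjugate_fin_two_of, mul_fin_two, trace_fin_two_of, det_fin_two_of]
  ring

theorem trace_mul_mul_inv_mul_inv_of_det_eq_one {A B : Matrix (Fin 2) (Fin 2) R}
    (hA : det A = 1) (hB : det B = 1) :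
    trace (A * B * A⁻¹ * B⁻¹) =
      trace A ^ 2 + trace B ^ 2 + trace (A * B) ^ 2 - trace A * trace B * trace (A * B) - 2 := by
  rw [inv_def, inv_def, hA, hB, Ring.inverse_one, one_smul, one_smul,
    trace_mul_mul_adjugate_mul_adjugate, hA, hB]
  ring

end Matrix

section TorusReflection

variable {K : Type*} [Field K]

def torusMatrix (z : K) : Matrix (Fin 2) (Fin 2) K := !![z⁻¹, 0; 0, z]

def reflMatrix (c u : K) : Matrix (Fin 2) (Fin 2) K := !![-c, u; u, c]

def torusReflProduct (c u x y : K) : Matrix (Fin 2) (Fin 2) K :=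
  torusMatrix x * reflMatrix c u * torusMatrix y * reflMatrix c u

theorem torusMatrix_pow (z : K) (n : ℕ) : torusMatrix z ^ n = torusMatrix (z ^ n) := by
  induction n with
  | zero => simp [torusMatrix, one_fin_two]
  | succ n ih =>
    rw [pow_succ, ih, torusMatrix, torusMatrix, mul_fin_two, torusMatrix]
    simp [pow_succ, mul_comm]

theorem smul_reflMatrix (a c u : K) : a • reflMatrix c u = reflMatrix (a * c) (a * u) := by
  simp [reflMatrix, smul_of]

theorem det_torusMatrix {z : K} (hz : z ≠ 0) : det (torusMatrix z) = 1 := by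
  simp [torusMatrix, det_fin_two_of, hz]

theorem det_reflMatrix (c u : K) : det (reflMatrix c u) = -(c ^ 2 + u ^ 2) := by
  rw [reflMatrix, det_fin_two_of]
  ring

theorem det_torusReflProduct {c u x y : K} (hx : x ≠ 0) (hy : y ≠ 0) (hcu : c ^ 2 + u ^ 2 = 1) :
    det (torusReflProduct c u x y) = 1 := by
  simp only [torusReflProduct, det_mul, det_torusMatrix hx, det_torusMatrix hy, det_reflMatrix, hcu]
  norm_num

theorem trace_torusReflProduct (c u x y : K) :
    trace (torusReflProduct c u x y) = c ^ 2 * ((x * y)⁻¹ + x * y) + u ^ 2 * (y / x + x / y) := by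
  simp only [torusReflProduct, torusMatrix, reflMatrix, mul_fin_two, trace_fin_two_of]
  ring

theorem trace_torusReflProduct_sq_mul_torusReflProduct_cube {q : K} (hq : q ≠ 0) (c u : K) :
    trace (torusReflProduct c u q (q ^ 2) * torusReflProduct c u q (q ^ 3)) =
      (c ^ 2) ^ 2 * (q ^ 7 + q⁻¹ ^ 7) + (u ^ 2) ^ 2 * (q ^ 3 + q⁻¹ ^ 3)
        + c ^ 2 * u ^ 2 * (2 * (q ^ 5 + q⁻¹ ^ 5) + q ^ 3 + q⁻¹ ^ 3 - q - q⁻¹) := by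
  simp only [torusReflProduct, torusMatrix, reflMatrix, mul_fin_two, trace_fin_two_of]
  field_simp
  ring

theorem trace_commutator_torusReflProduct {q c u : K} (hq : q ≠ 0) (hq1 : q + 1 ≠ 0)
    (hc : c ^ 2 = q / (q + 1) ^ 2) (hu : u ^ 2 = (q ^ 2 + q + 1) / (q + 1) ^ 2)
    {A B : Matrix (Fin 2) (Fin 2) K} (hA : A = -torusReflProduct c u q (q ^ 2))
    (hB : B = torusReflProduct c u q (q ^ 3)) :
    trace (A * B * A⁻¹ * B⁻¹) = -(q + q⁻¹) ^ 3 + 3 * (q + q⁻¹) ^ 2 - 2 := by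
  have hcu : c ^ 2 + u ^ 2 = 1 := by
    rw [hc, hu]
    field_simp
    ring
  have hdetA : det A = 1 := by
    rw [hA, det_neg, det_torusReflProduct hq (pow_ne_zero 2 hq) hcu]
    simp
  have hdetB : det B = 1 := hB ▸ det_torusReflProduct hq (pow_ne_zero 3 hq) hcu
  have htrA : trace A = (q + q⁻¹) - (q + q⁻¹) ^ 2 := by
    rw [hA, trace_neg, trace_torusReflProduct, hc, hu]
    field_simp
    ring
  have htrB : trace B = (q + q⁻¹) ^ 3 - (q + q⁻¹) ^ 2 - (q + q⁻¹) := by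
    rw [hB, trace_torusReflProduct, hc, hu]
    field_simp
    ring
  have htrAB : trace (A * B) =
      -(q + q⁻¹) ^ 5 + 2 * (q + q⁻¹) ^ 4 - (q + q⁻¹) ^ 2 + (q + q⁻¹) := by
    rw [hA, hB, neg_mul, trace_neg, trace_torusReflProduct_sq_mul_torusReflProduct_cube hq, hc, hu]
    field_simp
    ring
  rw [trace_mul_mul_inv_mul_inv_of_det_eq_one hdetA hdetB, htrA, htrB, htrAB]
  ring

end TorusReflection

theorem diag_I_pow_two_eq_neg_torusMatrix (t : ℂ) : !![I * t⁻¹, 0; 0, -I * t] ^ 2 = -torusMatrix (t ^ 2) := by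
  rw [pow_two, mul_fin_two, torusMatrix]
  ext i j
  fin_cases i <;> fin_cases j <;> simp <;> grind [I_mul_I]

theorem exp_mul_I_add_inv (θ : ℝ) : exp (θ * I) + (exp (θ * I))⁻¹ = 2 * Real.cos θ := by
  rw [← exp_neg, ← neg_mul, ofReal_cos, two_cos]

theorem exp_mul_I_add_one_ne_zero {θ : ℝ} (h : -1 < Real.cos θ) : exp (θ * I) + 1 ≠ 0 := by
  intro h0
  have := congrArg re (eq_neg_of_add_eq_zero_left h0)
  rw [exp_ofReal_mul_I_re, neg_re, one_re] at this
  linarith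

theorem cos_two_pi_div_nonneg {n : ℝ} (hn : 4 ≤ n) : 0 ≤ Real.cos (2 * Real.pi / n) := by
  have hθ : 0 ≤ 2 * Real.pi / n := by positivity
  refine Real.cos_nonneg_of_mem_Icc ⟨by linarith [Real.pi_pos], ?_⟩
  rw [div_le_div_iff₀ (by positivity) two_pos]
  nlinarith [Real.pi_pos]

theorem trace_W (k : ℕ) (hk : 2 ≤ k)
    (q : ℂ) (hq : q = Complex.exp (2 * Real.pi * Complex.I / ((k : ℂ) + 2)))
    (sq : ℂ) (hsq : sq = Complex.exp (Real.pi * Complex.I / ((k : ℂ) + 2)))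
    (s : ℂ) (hs : s ^ 2 = q + q⁻¹ + 1)
    (R F A B W : Matrix (Fin 2) (Fin 2) ℂ)
    (hR : R = !![Complex.I * sq⁻¹, 0; 0, -Complex.I * sq])
    (hF : F = (sq / (q + 1)) • !![-1, s; s, 1])
    (hA : A = R ^ 2 * F * R ^ 4 * F)
    (hB : B = R ^ 2 * F * R ^ 6 * F)
    (hW : W = A * B * A⁻¹ * B⁻¹) :
    W.trace = 4 - 2 * Real.cos (6 * Real.pi / ((k : ℝ) + 2))
      + 6 * Real.cos (4 * Real.pi / ((k : ℝ) + 2))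
      - 6 * Real.cos (2 * Real.pi / ((k : ℝ) + 2)) := by
  set θ : ℝ := 2 * Real.pi / ((k : ℝ) + 2) with hθ
  have hqθ : q = exp (θ * I) := by rw [hq, hθ]; congr 1; push_cast; ring
  have hsq2 : sq ^ 2 = q := by rw [hsq, hq, ← exp_nat_mul]; congr 1; push_cast; ring
  have hq0 : q ≠ 0 := hqθ ▸ exp_ne_zero _
  have hq1 : q + 1 ≠ 0 := hqθ ▸ exp_mul_I_add_one_ne_zero
    (by linarith [cos_two_pi_div_nonneg (n := (k : ℝ) + 2) (by norm_cast; omega)])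
  have hR2 : R ^ 2 = -torusMatrix q := by rw [hR, diag_I_pow_two_eq_neg_torusMatrix, hsq2]
  have hF' : F = reflMatrix (sq / (q + 1)) (sq / (q + 1) * s) := by
    rw [hF]
    exact (smul_reflMatrix _ 1 s).trans (by rw [mul_one])
  have hA' : A = -torusReflProduct (sq / (q + 1)) (sq / (q + 1) * s) q (q ^ 2) := by
    rw [hA, show 4 = 2 * 2 from rfl, pow_mul, hR2, neg_sq, torusMatrix_pow, hF', torusReflProduct]
    noncomm_ring
  have hB' : B = torusReflProduct (sq / (q + 1)) (sq / (q + 1) * s) q (q ^ 3) := by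
    rw [hB, show 6 = 2 * 3 from rfl, pow_mul, hR2, Odd.neg_pow (by decide), torusMatrix_pow, hF',
      torusReflProduct]
    noncomm_ring
  have hc : (sq / (q + 1)) ^ 2 = q / (q + 1) ^ 2 := by rw [div_pow, hsq2]
  have hu : (sq / (q + 1) * s) ^ 2 = (q ^ 2 + q + 1) / (q + 1) ^ 2 := by
    rw [mul_pow, div_pow, hsq2, hs]
    field_simp
    ring
  have hp : q + q⁻¹ = 2 * Real.cos θ := hqθ ▸ exp_mul_I_add_inv θ
  rw [hW, trace_commutator_torusReflProduct hq0 hq1 hc hu hA' hB', hp,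
    show 6 * Real.pi / ((k : ℝ) + 2) = 3 * θ by ring,
    show 4 * Real.pi / ((k : ℝ) + 2) = 2 * θ by ring, Real.cos_three_mul, Real.cos_two_mul]
  push_cast
  ring
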